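/- If W₁ is a {0,1}-valued n-step graphon and W₂ is an arbitrary graphon on the same probability space, then ‖W₁ − W₂‖_{L¹} ≤ n² ‖W₁ − W₂‖_□. -/

import Mathlib

/-!
On each block `A i × A j` the step graphon `W₁` is a constant in `{0, 1}` while `W₂` takes values
in `[0, 1]`, so `W₁ - W₂` has constant sign there. Hence its `L¹` mass on the block is the absolute
value of its integral over the block, which is at most the cut norm; there are `n²` blocks.
-/

open MeasureTheory

/-- The cut norm defined with measurable sets. -/
noncomputable def cutNorm1 {S : Type*} [MeasurableSpace S] (μ : Measure S)
    (W : S → S → ℝ) : ℝ :=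
  sSup {r : ℝ | ∃ A B : Set S, MeasurableSet A ∧ MeasurableSet B ∧
    r = |∫ p in A ×ˢ B, W p.1 p.2 ∂(μ.prod μ)|}

theorem Pairwise.disjoint_prod_self {ι α : Type*} {A : ι → Set α}
    (h : Pairwise (Function.onFun Disjoint A)) :
    Pairwise (Function.onFun Disjoint fun p : ι × ι => A p.1 ×ˢ A p.2) := by
  have := Set.PairwiseDisjoint.prod (Set.pairwise_univ.2 h : Set.univ.PairwiseDisjoint A)
    (Set.pairwise_univ.2 h : Set.univ.PairwiseDisjoint A)
  rwa [Set.univ_prod_univ, Set.PairwiseDisjoint, Set.pairwise_univ] at this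

theorem integral_eq_sum_setIntegral_of_iUnion_eq_univ {X ι : Type*} [MeasurableSpace X]
    [Fintype ι] {μ : Measure X} {f : X → ℝ} (hf : Integrable f μ) {s : ι → Set X}
    (hs : ∀ i, MeasurableSet (s i)) (hdisj : Pairwise (Function.onFun Disjoint s))
    (hcover : ⋃ i, s i = Set.univ) :
    ∫ x, f x ∂μ = ∑ i, ∫ x in s i, f x ∂μ := by
  rw [← setIntegral_univ, ← hcover, integral_iUnion_fintype hs hdisj fun i => hf.integrableOn]

theorem integral_eq_sum_setIntegral_prod {X ι : Type*} [MeasurableSpace X] [Fintype ι]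
    {μ : Measure (X × X)} {f : X × X → ℝ} (hf : Integrable f μ) {A : ι → Set X}
    (hA : ∀ i, MeasurableSet (A i)) (hdisj : Pairwise (Function.onFun Disjoint A))
    (hcover : ⋃ i, A i = Set.univ) :
    ∫ x, f x ∂μ = ∑ p : ι × ι, ∫ x in A p.1 ×ˢ A p.2, f x ∂μ :=
  integral_eq_sum_setIntegral_of_iUnion_eq_univ hf (fun p => (hA p.1).prod (hA p.2))
    hdisj.disjoint_prod_self (by rw [Set.iUnion_prod, hcover, Set.univ_prod_univ])

theorem setIntegral_abs_eq_abs_setIntegral {X : Type*} [MeasurableSpace X] {μ : Measure X}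
    {f : X → ℝ} {s : Set X} (hs : MeasurableSet s)
    (hsign : (∀ x ∈ s, 0 ≤ f x) ∨ (∀ x ∈ s, f x ≤ 0)) :
    ∫ x in s, |f x| ∂μ = |∫ x in s, f x ∂μ| := by
  rcases hsign with hpos | hneg
  · rw [setIntegral_congr_fun hs fun x hx => abs_of_nonneg (hpos x hx),
      abs_of_nonneg (setIntegral_nonneg hs hpos)]
  · rw [setIntegral_congr_fun hs fun x hx => abs_of_nonpos (hneg x hx), integral_neg,
      abs_of_nonpos (setIntegral_nonpos hs hneg)]

theorem forall_sub_nonneg_or_forall_sub_nonpos {X : Type*} {s : Set X} {g h : X → ℝ} {c : ℝ}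
    (hg : ∀ x, g x = 0 ∨ g x = 1) (hgc : ∀ x ∈ s, g x = c) (hh : ∀ x, h x ∈ Set.Icc 0 1) :
    (∀ x ∈ s, 0 ≤ g x - h x) ∨ (∀ x ∈ s, g x - h x ≤ 0) := by
  by_cases hc : c = 1
  · left
    intro x hx
    linarith [hgc x hx, (hh x).2]
  · right
    intro x hx
    have : g x = 0 := (hg x).resolve_right (hgc x hx ▸ hc)
    linarith [(hh x).1]

section CutNorm

variable {S : Type*} [MeasurableSpace S] {μ : Measure S} {W : S → S → ℝ}

theorem bddAbove_cutNorm1_set (hW : Integrable (fun p : S × S => W p.1 p.2) (μ.prod μ)) :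
    BddAbove {r : ℝ | ∃ A B : Set S, MeasurableSet A ∧ MeasurableSet B ∧
      r = |∫ p in A ×ˢ B, W p.1 p.2 ∂(μ.prod μ)|} := by
  refine ⟨∫ p, |W p.1 p.2| ∂(μ.prod μ), ?_⟩
  rintro r ⟨A, B, -, -, rfl⟩
  exact abs_integral_le_integral_abs.trans
    (setIntegral_le_integral hW.abs (ae_of_all _ fun p => abs_nonneg _))

theorem abs_setIntegral_prod_le_cutNorm1
    (hW : Integrable (fun p : S × S => W p.1 p.2) (μ.prod μ)) {A B : Set S}
    (hA : MeasurableSet A) (hB : MeasurableSet B) :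
    |∫ p in A ×ˢ B, W p.1 p.2 ∂(μ.prod μ)| ≤ cutNorm1 μ W :=
  le_csSup (bddAbove_cutNorm1_set hW) ⟨A, B, hA, hB, rfl⟩

end CutNorm

theorem L1_le_sq_mul_cutNorm_general {S : Type*} [MeasurableSpace S]
    (μ : Measure S) [IsProbabilityMeasure μ] (n : ℕ)
    (W₁ W₂ : S → S → ℝ)
    (hW₁m : Measurable (fun p : S × S => W₁ p.1 p.2))
    (hW₂m : Measurable (fun p : S × S => W₂ p.1 p.2))
    (hW₁r : ∀ x y, W₁ x y = 0 ∨ W₁ x y = 1)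
    (hW₂r : ∀ x y, W₂ x y ∈ Set.Icc (0 : ℝ) 1)
    (A : Fin n → Set S)
    (hAmeas : ∀ i, MeasurableSet (A i))
    (hAdisj : Pairwise (Function.onFun Disjoint A))
    (hAcover : (⋃ i, A i) = Set.univ)
    (hstep : ∀ i j, ∃ c : ℝ, ∀ x ∈ A i, ∀ y ∈ A j, W₁ x y = c) :
    (∫ p, |W₁ p.1 p.2 - W₂ p.1 p.2| ∂(μ.prod μ)) ≤
      (n : ℝ) ^ 2 * cutNorm1 μ (fun x y => W₁ x y - W₂ x y) := by
  have hW₁ : Integrable (fun p : S × S => W₁ p.1 p.2) (μ.prod μ) :=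
    .of_mem_Icc 0 1 hW₁m.aemeasurable <| ae_of_all _ fun p => by
      rcases hW₁r p.1 p.2 with h | h <;> simp [h]
  have hW₂ : Integrable (fun p : S × S => W₂ p.1 p.2) (μ.prod μ) :=
    .of_mem_Icc 0 1 hW₂m.aemeasurable <| ae_of_all _ fun p => hW₂r p.1 p.2
  have hdiff : Integrable (fun p : S × S => W₁ p.1 p.2 - W₂ p.1 p.2) (μ.prod μ) := hW₁.sub hW₂
  have hblock (p : Fin n × Fin n) :
      ∫ q in A p.1 ×ˢ A p.2, |W₁ q.1 q.2 - W₂ q.1 q.2| ∂(μ.prod μ) =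
        |∫ q in A p.1 ×ˢ A p.2, W₁ q.1 q.2 - W₂ q.1 q.2 ∂(μ.prod μ)| := by
    obtain ⟨c, hc⟩ := hstep p.1 p.2
    exact setIntegral_abs_eq_abs_setIntegral ((hAmeas p.1).prod (hAmeas p.2)) <|
      forall_sub_nonneg_or_forall_sub_nonpos (fun q => hW₁r q.1 q.2)
        (fun q hq => hc _ hq.1 _ hq.2) (fun q => hW₂r q.1 q.2)
  calc ∫ q, |W₁ q.1 q.2 - W₂ q.1 q.2| ∂(μ.prod μ)
      = ∑ p : Fin n × Fin n, |∫ q in A p.1 ×ˢ A p.2, W₁ q.1 q.2 - W₂ q.1 q.2 ∂(μ.prod μ)| :=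
        (integral_eq_sum_setIntegral_prod hdiff.abs hAmeas hAdisj hAcover).trans
          (Fintype.sum_congr _ _ hblock)
    _ ≤ ∑ _p : Fin n × Fin n, cutNorm1 μ (fun x y => W₁ x y - W₂ x y) :=
        Finset.sum_le_sum fun p _ =>
          abs_setIntegral_prod_le_cutNorm1 (W := fun x y => W₁ x y - W₂ x y) hdiff
            (hAmeas p.1) (hAmeas p.2)
    _ = (n : ℝ) ^ 2 * cutNorm1 μ (fun x y => W₁ x y - W₂ x y) := by
        simp [sq]

/-- If `W₁` is a `{0,1}`-valued `n`-step graphon and `W₂` is an arbitrary graphon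
on the same probability space, then `‖W₁ − W₂‖₁ ≤ n² ‖W₁ − W₂‖_□`. -/
theorem L1_le_sq_mul_cutNorm {S : Type*} [MeasurableSpace S]
    (μ : Measure S) [IsProbabilityMeasure μ] (n : ℕ)
    (W₁ W₂ : S → S → ℝ)
    (hW₁m : Measurable (fun p : S × S => W₁ p.1 p.2))
    (hW₂m : Measurable (fun p : S × S => W₂ p.1 p.2))
    (hW₁sym : ∀ x y, W₁ x y = W₁ y x)
    (hW₂sym : ∀ x y, W₂ x y = W₂ y x)
    (hW₁r : ∀ x y, W₁ x y = 0 ∨ W₁ x y = 1)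
    (hW₂r : ∀ x y, W₂ x y ∈ Set.Icc (0 : ℝ) 1)
    (A : Fin n → Set S)
    (hAmeas : ∀ i, MeasurableSet (A i))
    (hAdisj : Pairwise (Function.onFun Disjoint A))
    (hAcover : (⋃ i, A i) = Set.univ)
    (hstep : ∀ i j, ∃ c : ℝ, ∀ x ∈ A i, ∀ y ∈ A j, W₁ x y = c) :
    (∫ p, |W₁ p.1 p.2 - W₂ p.1 p.2| ∂(μ.prod μ)) ≤
      (n : ℝ) ^ 2 * cutNorm1 μ (fun x y => W₁ x y - W₂ x y) :=
  L1_le_sq_mul_cutNorm_general μ n W₁ W₂ hW₁m hW₂m hW₁r hW₂r A hAmeas hAdisj hAcover hstep
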